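/- arXiv:2402.15017 — 2 statements merged into one kernel-verified Lean document; each statement's English description precedes it below -/
import Mathlib

section
/- Deterministic core of Theorem B.7 (direct adaptation after supervised pretraining): Assume τ < 1, ν > 0, and 0 < l ≤ η(y) ≤ u for all y ∈ 𝒴, and set ρ := u/l. Assume Φ has ν-diversity with respect to φ*_ζ and κ-consistency with respect to φ* and φ*_ζ, and let ε₀ ∈ ℝ. If φ̂ ∈ Φ satisfies L_sup-pre(φ̂) ≤ 2ε₀, then for all distinct target classes y₁, y₂ ∈ 𝒞₀: L_sup(y₁,y₂,φ̂) − L_sup(y₁,y₂,φ*) ≤ (1/ν)·( 2ρ²ε₀ − L_sup(φ*_ζ) ) + κ. -/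
open scoped BigOperators

/-- Logistic loss `ℓ(v) = log(1 + exp(-v))`. -/
noncomputable def ell (v : ℝ) : ℝ := Real.log (1 + Real.exp (-v))

/-- Standard inner product on `ℝ^d`. -/
noncomputable def dot {d : ℕ} (v w : Fin d → ℝ) : ℝ := ∑ i, v i * w i

/-- Binary supervised task loss for the task with classes `y₁, y₂`. -/
noncomputable def Lsup {Y X : Type*} [Fintype X] {d : ℕ}
    (D : Y → X → ℝ) (y₁ y₂ : Y) (φ : X → Fin d → ℝ) : ℝ :=
  ⨅ w : Fin d → ℝ,
    (1 / 2) * ((∑ x, D y₁ x * ell (dot w (φ x))) +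
      ∑ x, D y₂ x * ell (-(dot w (φ x))))

/-- Collision probability `τ = Σ_y η(y)²`. -/
noncomputable def tau {Y : Type*} [Fintype Y] (η : Y → ℝ) : ℝ := ∑ y, (η y) ^ 2

/-- Task-averaged supervised loss (for `τ < 1`). -/
noncomputable def LsupAvg {Y X : Type*} [Fintype Y] [Fintype X] [DecidableEq Y] {d : ℕ}
    (η : Y → ℝ) (D : Y → X → ℝ) (φ : X → Fin d → ℝ) : ℝ :=
  (1 / (1 - tau η)) *
    ∑ y₁, ∑ y₂, if y₁ ≠ y₂ then η y₁ * η y₂ * Lsup D y₁ y₂ φ else 0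

/-- Population supervised pretraining (cross-entropy) loss. -/
noncomputable def LsupPre {Y X : Type*} [Fintype Y] [Fintype X] {d : ℕ}
    (η : Y → ℝ) (D : Y → X → ℝ) (φ : X → Fin d → ℝ) : ℝ :=
  ⨅ W : Y → Fin d → ℝ,
    ∑ y, η y * ∑ x, D y x *
      Real.log ((∑ y', Real.exp (dot (W y') (φ x))) / Real.exp (dot (W y) (φ x)))

lemma ell_nonneg (v : ℝ) : 0 ≤ ell v :=
  Real.log_nonneg (by nlinarith [Real.exp_pos (-v)])

lemma dot_sub {d : ℕ} (a b v : Fin d → ℝ) :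
    dot (fun i => a i - b i) v = dot a v - dot b v := by
  simp [dot, sub_mul, Finset.sum_sub_distrib]

lemma ell_le {Y : Type*} [Fintype Y] [DecidableEq Y] (s : Y → ℝ) (a b : Y) (hab : a ≠ b) :
    ell (s a - s b) ≤ Real.log ((∑ y, Real.exp (s y)) / Real.exp (s a)) := by
  have h1 : Real.exp (s a) + Real.exp (s b) ≤ ∑ y, Real.exp (s y) := by
    have hp := Finset.sum_pair (f := fun y => Real.exp (s y)) hab
    rw [← hp]
    exact Finset.sum_le_sum_of_subset_of_nonneg (Finset.subset_univ _)
      (fun _ _ _ => (Real.exp_pos _).le)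
  have hpa : (0:ℝ) < Real.exp (s a) := Real.exp_pos _
  have hpb : (0:ℝ) < Real.exp (s b) := Real.exp_pos _
  have he : ell (s a - s b)
      = Real.log ((Real.exp (s a) + Real.exp (s b)) / Real.exp (s a)) := by
    unfold ell
    congr 1
    rw [neg_sub, Real.exp_sub]
    field_simp
  rw [he]
  have h2 : (Real.exp (s a) + Real.exp (s b)) / Real.exp (s a)
      ≤ (∑ y, Real.exp (s y)) / Real.exp (s a) := by gcongr
  exact Real.log_le_log (by positivity) h2

/-- Deterministic core of Theorem B.7: direct adaptation after supervised pretraining. -/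
theorem direct_adaptation_after_supervised_pretraining
    {Y X : Type*} [Fintype Y] [Fintype X] [DecidableEq Y] [Nonempty X]
    (hY : 2 ≤ Fintype.card Y)
    (η : Y → ℝ) (hη1 : ∑ y, η y = 1)
    (l u : ℝ) (hl : 0 < l) (hηl : ∀ y, l ≤ η y) (hηu : ∀ y, η y ≤ u)
    (D : Y → X → ℝ) (hD0 : ∀ y x, 0 ≤ D y x) (hD1 : ∀ y, ∑ x, D y x = 1)
    {d : ℕ} (hd : 1 ≤ d)
    (C₀ : Set Y) (Φ : Set (X → Fin d → ℝ))
    (φstar φζ : X → Fin d → ℝ)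
    (ν κ ε₀ : ℝ) (hτ : tau η < 1) (hν : 0 < ν)
    -- ν-diversity of Φ with respect to φζ
    (hdiv : ∀ φ ∈ Φ, ∀ y₁ ∈ C₀, ∀ y₂ ∈ C₀, y₁ ≠ y₂ →
      |Lsup D y₁ y₂ φ - Lsup D y₁ y₂ φζ| ≤ (LsupAvg η D φ - LsupAvg η D φζ) / ν)
    -- κ-consistency of Φ with respect to φstar and φζ
    (hcons : ∀ y₁ ∈ C₀, ∀ y₂ ∈ C₀, y₁ ≠ y₂ →
      Lsup D y₁ y₂ φζ - Lsup D y₁ y₂ φstar ≤ κ)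
    (φhat : X → Fin d → ℝ) (hΦ : φhat ∈ Φ)
    (hpre : LsupPre η D φhat ≤ 2 * ε₀) :
    ∀ y₁ ∈ C₀, ∀ y₂ ∈ C₀, y₁ ≠ y₂ →
      Lsup D y₁ y₂ φhat - Lsup D y₁ y₂ φstar ≤
        (1 / ν) * (2 * (u / l) ^ 2 * ε₀ - LsupAvg η D φζ) + κ := by
  intro y₁ hy₁ y₂ hy₂ hne
  -- basic facts
  have hη0 : ∀ y, 0 ≤ η y := fun y => le_trans hl.le (hηl y)
  have hNY : Nonempty Y := Fintype.card_pos_iff.mp (by omega)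
  obtain ⟨y₀⟩ := hNY
  have hlu : l ≤ u := le_trans (hηl y₀) (hηu y₀)
  have hu : 0 < u := lt_of_lt_of_le hl hlu
  set c : ℝ := (Fintype.card Y : ℝ) - 1 with hcdef
  have hc : (1:ℝ) ≤ c := by
    have : (2:ℝ) ≤ (Fintype.card Y : ℝ) := by exact_mod_cast hY
    simp only [hcdef]; linarith
  have hη_le_one : ∀ y, η y ≤ 1 := by
    intro y
    have := Finset.single_le_sum (f := η) (fun y' _ => hη0 y') (Finset.mem_univ y)
    rw [hη1] at this; exact this
  -- 1 - tau ≥ l * c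
  have hτ' : l * c ≤ 1 - tau η := by
    have e1 : 1 - tau η = ∑ y, η y * (1 - η y) := by
      unfold tau
      rw [Finset.sum_congr rfl (fun y _ => by ring :
        ∀ y ∈ Finset.univ, η y * (1 - η y) = η y - η y ^ 2)]
      rw [Finset.sum_sub_distrib, hη1]
    have e2 : ∑ y, l * (1 - η y) = l * c := by
      rw [Finset.sum_congr rfl (fun y _ => by ring :
        ∀ y ∈ Finset.univ, l * (1 - η y) = l - l * η y)]
      rw [Finset.sum_sub_distrib, Finset.sum_const, ← Finset.mul_sum, hη1,
        Finset.card_univ, nsmul_eq_mul, hcdef]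
      ring
    rw [e1, ← e2]
    exact Finset.sum_le_sum fun y _ =>
      mul_le_mul_of_nonneg_right (hηl y) (by linarith [hη_le_one y])
  have h1τ : (0:ℝ) < 1 - tau η := by linarith
  -- the T quantities
  set T : (Y → Fin d → ℝ) → Y → ℝ := fun W y => ∑ x, D y x *
      Real.log ((∑ y', Real.exp (dot (W y') (φhat x))) / Real.exp (dot (W y) (φhat x)))
    with hTdef
  have hT0 : ∀ W y, 0 ≤ T W y := by
    intro W y
    apply Finset.sum_nonneg
    intro x _
    apply mul_nonneg (hD0 y x)
    apply Real.log_nonneg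
    rw [le_div_iff₀ (Real.exp_pos _), one_mul]
    exact Finset.single_le_sum (f := fun y' => Real.exp (dot (W y') (φhat x)))
      (fun _ _ => (Real.exp_pos _).le) (Finset.mem_univ y)
  have hPreEq : LsupPre η D φhat = ⨅ W : Y → Fin d → ℝ, ∑ y, η y * T W y := rfl
  -- pointwise pair bound
  have hbdd : ∀ (a b : Y), BddBelow (Set.range (fun w : Fin d → ℝ =>
      (1 / 2) * ((∑ x, D a x * ell (dot w (φhat x))) +
        ∑ x, D b x * ell (-(dot w (φhat x)))))) := by
    intro a b
    refine ⟨0, ?_⟩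
    rintro v ⟨w, rfl⟩
    have h1 : 0 ≤ ∑ x, D a x * ell (dot w (φhat x)) :=
      Finset.sum_nonneg fun x _ => mul_nonneg (hD0 a x) (ell_nonneg _)
    have h2 : 0 ≤ ∑ x, D b x * ell (-(dot w (φhat x))) :=
      Finset.sum_nonneg fun x _ => mul_nonneg (hD0 b x) (ell_nonneg _)
    simp only
    linarith
  have hpair : ∀ (W : Y → Fin d → ℝ) (a b : Y), a ≠ b →
      Lsup D a b φhat ≤ (T W a + T W b) / 2 := by
    intro W a b hab
    have hLe : Lsup D a b φhat ≤
        (1 / 2) * ((∑ x, D a x * ell (dot (fun i => W a i - W b i) (φhat x))) +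
          ∑ x, D b x * ell (-(dot (fun i => W a i - W b i) (φhat x)))) :=
      ciInf_le (hbdd a b) (fun i => W a i - W b i)
    refine le_trans hLe ?_
    have hA : (∑ x, D a x * ell (dot (fun i => W a i - W b i) (φhat x))) ≤ T W a := by
      apply Finset.sum_le_sum
      intro x _
      apply mul_le_mul_of_nonneg_left _ (hD0 a x)
      rw [dot_sub]
      exact ell_le (fun y' => dot (W y') (φhat x)) a b hab
    have hB : (∑ x, D b x * ell (-(dot (fun i => W a i - W b i) (φhat x)))) ≤ T W b := by
      apply Finset.sum_le_sum
      intro x _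
      apply mul_le_mul_of_nonneg_left _ (hD0 b x)
      rw [dot_sub, neg_sub]
      exact ell_le (fun y' => dot (W y') (φhat x)) b a hab.symm
    linarith
  -- the task-average sum
  set S : ℝ := ∑ a, ∑ b, if a ≠ b then η a * η b * Lsup D a b φhat else 0 with hSdef
  have keyR : ∀ (r : ℝ) (a : Y), (∑ b, if a ≠ b then r else 0) = c * r := by
    intro r a
    have h : ∀ b : Y, (if a ≠ b then r else 0) = r - (if a = b then r else 0) := by
      intro b; by_cases h : a = b <;> simp [h]
    simp_rw [h]
    rw [Finset.sum_sub_distrib, Finset.sum_const, Finset.sum_ite_eq]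
    simp [Finset.card_univ, hcdef]
    ring
  have keyL : ∀ (r : ℝ) (a : Y), (∑ b, if b ≠ a then r else 0) = c * r := by
    intro r a
    have h : ∀ b : Y, (if b ≠ a then r else 0) = r - (if b = a then r else 0) := by
      intro b; by_cases h : b = a <;> simp [h]
    simp_rw [h]
    rw [Finset.sum_sub_distrib, Finset.sum_const, Finset.sum_ite_eq']
    simp [Finset.card_univ, hcdef]
    ring
  have hS : ∀ W : Y → Fin d → ℝ, S ≤ u * c * ∑ y, η y * T W y := by
    intro W
    have step1 : S ≤ ∑ a, ∑ b,
        ((if a ≠ b then u * (η a * T W a) / 2 else 0) +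
         (if a ≠ b then u * (η b * T W b) / 2 else 0)) := by
      rw [hSdef]
      apply Finset.sum_le_sum; intro a _
      apply Finset.sum_le_sum; intro b _
      by_cases hab : a = b
      · simp [hab]
      · rw [if_pos hab, if_pos hab, if_pos hab]
        have h1 := hpair W a b hab
        have h2 : η a * η b * Lsup D a b φhat ≤ η a * η b * ((T W a + T W b) / 2) :=
          mul_le_mul_of_nonneg_left h1 (mul_nonneg (hη0 a) (hη0 b))
        have h3 : η b * (η a * T W a) ≤ u * (η a * T W a) :=
          mul_le_mul_of_nonneg_right (hηu b) (mul_nonneg (hη0 a) (hT0 W a))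
        have h4 : η a * (η b * T W b) ≤ u * (η b * T W b) :=
          mul_le_mul_of_nonneg_right (hηu a) (mul_nonneg (hη0 b) (hT0 W b))
        nlinarith [h2, h3, h4]
    have step2 : (∑ a, ∑ b : Y,
        ((if a ≠ b then u * (η a * T W a) / 2 else 0) +
         (if a ≠ b then u * (η b * T W b) / 2 else 0)))
        = u * c * ∑ y, η y * T W y := by
      rw [Finset.sum_congr rfl (fun a _ => Finset.sum_add_distrib)]
      rw [Finset.sum_add_distrib]
      have e1 : (∑ a, ∑ b : Y, if a ≠ b then u * (η a * T W a) / 2 else 0)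
          = ∑ a, c * (u * (η a * T W a) / 2) :=
        Finset.sum_congr rfl fun a _ => keyR _ a
      have e2 : (∑ a, ∑ b : Y, if a ≠ b then u * (η b * T W b) / 2 else 0)
          = ∑ b, c * (u * (η b * T W b) / 2) := by
        rw [Finset.sum_comm]
        exact Finset.sum_congr rfl fun b _ => keyL _ b
      rw [e1, e2, ← Finset.sum_add_distrib, Finset.mul_sum]
      apply Finset.sum_congr rfl
      intro y _; ring
    calc S ≤ _ := step1
      _ = _ := step2
  -- transfer to the infimum
  have huc : (0:ℝ) < u * c := mul_pos hu (by linarith)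
  have hSPre : S ≤ u * c * LsupPre η D φhat := by
    rw [hPreEq]
    have h1 : S / (u * c) ≤ ⨅ W : Y → Fin d → ℝ, ∑ y, η y * T W y := by
      apply le_ciInf
      intro W
      rw [div_le_iff₀ huc]
      calc S ≤ u * c * ∑ y, η y * T W y := hS W
        _ = (∑ y, η y * T W y) * (u * c) := by ring
    calc S = S / (u * c) * (u * c) := by field_simp
      _ ≤ (⨅ W : Y → Fin d → ℝ, ∑ y, η y * T W y) * (u * c) :=
          mul_le_mul_of_nonneg_right h1 huc.le
      _ = u * c * ⨅ W : Y → Fin d → ℝ, ∑ y, η y * T W y := by ring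
  have hPre0 : 0 ≤ LsupPre η D φhat := by
    rw [hPreEq]
    exact le_ciInf fun W => Finset.sum_nonneg fun y _ => mul_nonneg (hη0 y) (hT0 W y)
  have hε0 : 0 ≤ ε₀ := by linarith
  -- bound on the task-averaged loss of φhat
  have hAvgEq : LsupAvg η D φhat = (1 / (1 - tau η)) * S := rfl
  have hAvg : LsupAvg η D φhat ≤ 2 * (u / l) ^ 2 * ε₀ := by
    have hS2 : S ≤ u * c * (2 * ε₀) := by
      calc S ≤ u * c * LsupPre η D φhat := hSPre
        _ ≤ u * c * (2 * ε₀) := mul_le_mul_of_nonneg_left hpre huc.le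
    have hlc : (0:ℝ) < l * c := mul_pos hl (by linarith)
    have e1 : (1:ℝ) / (1 - tau η) ≤ 1 / (l * c) :=
      one_div_le_one_div_of_le hlc hτ'
    have e2 : (0:ℝ) ≤ u * c * (2 * ε₀) := by positivity
    have hul1 : (1:ℝ) ≤ u / l := (one_le_div hl).2 hlu
    calc LsupAvg η D φhat = (1 / (1 - tau η)) * S := hAvgEq
      _ ≤ (1 / (1 - tau η)) * (u * c * (2 * ε₀)) :=
          mul_le_mul_of_nonneg_left hS2 (by positivity)
      _ ≤ (1 / (l * c)) * (u * c * (2 * ε₀)) :=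
          mul_le_mul_of_nonneg_right e1 e2
      _ = 2 * (u / l) * ε₀ := by
          field_simp
      _ ≤ 2 * (u / l) ^ 2 * ε₀ := by
          nlinarith [hul1, hε0, mul_nonneg hε0 (mul_nonneg
            (by linarith : (0:ℝ) ≤ u / l) (by linarith : (0:ℝ) ≤ u / l - 1))]
  -- conclude via diversity and consistency
  have hd1 := hdiv φhat hΦ y₁ hy₁ y₂ hy₂ hne
  have hd2 : Lsup D y₁ y₂ φhat - Lsup D y₁ y₂ φζ ≤
      (LsupAvg η D φhat - LsupAvg η D φζ) / ν :=
    le_trans (le_abs_self _) hd1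
  have hd3 : (LsupAvg η D φhat - LsupAvg η D φζ) / ν ≤
      (2 * (u / l) ^ 2 * ε₀ - LsupAvg η D φζ) / ν := by
    gcongr
  have hrw : (1 / ν) * (2 * (u / l) ^ 2 * ε₀ - LsupAvg η D φζ)
      = (2 * (u / l) ^ 2 * ε₀ - LsupAvg η D φζ) / ν := by ring
  have hc2 := hcons y₁ hy₁ y₂ hy₂ hne
  linarith [hd2, hd3, hc2, hrw.ge, hrw.le]
end

section
/- Lemma D.1 (uniqueness of the maximizer under non-degeneracy): Assume R > 0, k ≥ 2, and that ζ is exchangeable and non-degenerate. If λ ∈ ℝ^k satisfies Σ_i λ_i² ≤ R² and F(λ) ≥ F(μ) for every μ ∈ ℝ^k with Σ_i μ_i² ≤ R² (i.e., λ maximizes F over the ball of radius R), then λ_i² = R²/k for every i ∈ {1,…,k}. -/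
open scoped BigOperators

/-- Objective `F(λ) = Σ_{(z,z')} ζ(z,z')·√(Σ_i λ_i²·1[z_i ≠ z'_i])`, where points of
`{−1,+1}^k` are encoded as `Fin k → Bool`. -/
noncomputable def F {k : ℕ} (ζ : ((Fin k → Bool) × (Fin k → Bool)) → ℝ)
    (lam : Fin k → ℝ) : ℝ :=
  ∑ p : (Fin k → Bool) × (Fin k → Bool),
    ζ p * Real.sqrt (∑ i, (lam i) ^ 2 * (if p.1 i ≠ p.2 i then 1 else 0))

/-- `ζ` is exchangeable: invariant under simultaneous coordinate permutations. -/
def Exchangeable {k : ℕ} (ζ : ((Fin k → Bool) × (Fin k → Bool)) → ℝ) : Prop :=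
  ∀ σ : Equiv.Perm (Fin k), ∀ p : (Fin k → Bool) × (Fin k → Bool),
    ζ (p.1 ∘ σ, p.2 ∘ σ) = ζ p

/-- `ζ` is non-degenerate: any two distinct coordinates `j ≠ j'` satisfy
`ζ{z_j = z'_j and z_{j'} ≠ z'_{j'}} > 0`. -/
def NonDegenerate {k : ℕ} (ζ : ((Fin k → Bool) × (Fin k → Bool)) → ℝ) : Prop :=
  ∀ j j' : Fin k, j ≠ j' →
    0 < ∑ p : (Fin k → Bool) × (Fin k → Bool),
      if p.1 j = p.2 j ∧ p.1 j' ≠ p.2 j' then ζ p else 0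

/-! `F` depends on `λ` only through the squares `λ_i²`, and is concave in them. Replacing the
squares of `λ` by the average of those of `λ` and of its transposed copy `λ ∘ (j j')` keeps the norm;
exchangeability gives `F(λ ∘ (j j')) = F(λ)`, and non-degeneracy provides a pair `(z, z')` of positive
mass on which strict concavity of `√` applies. So a maximizer has all `λ_i²` equal to some `c`.
Then `F(λ) = √c · F(1)` with `F(1) > 0`, and comparing with the uniform vector of norm `R` forces
`c ≥ R²/k`, while the ball constraint gives `c ≤ R²/k`. -/

lemma Real.sqrt_midpoint_le {x y : ℝ} (hx : 0 ≤ x) (hy : 0 ≤ y) :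
    (√x + √y) / 2 ≤ √((x + y) / 2) := by
  have := Real.strictConcaveOn_sqrt.concaveOn.2 hx hy (by norm_num : (0 : ℝ) ≤ 1 / 2)
    (by norm_num : (0 : ℝ) ≤ 1 / 2) (by norm_num)
  rw [show (x + y) / 2 = 1 / 2 * x + 1 / 2 * y by ring]
  simp only [smul_eq_mul] at this
  linarith

lemma Real.sqrt_midpoint_lt {x y : ℝ} (hx : 0 ≤ x) (hy : 0 ≤ y) (hxy : x ≠ y) :
    (√x + √y) / 2 < √((x + y) / 2) := by
  have := Real.strictConcaveOn_sqrt.2 hx hy hxy (by norm_num : (0 : ℝ) < 1 / 2)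
    (by norm_num : (0 : ℝ) < 1 / 2) (by norm_num)
  rw [show (x + y) / 2 = 1 / 2 * x + 1 / 2 * y by ring]
  simp only [smul_eq_mul] at this
  linarith

def maskedSqNorm {k : ℕ} (p : (Fin k → Bool) × (Fin k → Bool)) (lam : Fin k → ℝ) : ℝ :=
  ∑ i, lam i ^ 2 * (if p.1 i ≠ p.2 i then 1 else 0)

section

variable {k : ℕ} {ζ : ((Fin k → Bool) × (Fin k → Bool)) → ℝ}

lemma F_eq_sum_maskedSqNorm (lam : Fin k → ℝ) :
    F ζ lam = ∑ p, ζ p * √(maskedSqNorm p lam) :=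
  rfl

lemma maskedSqNorm_nonneg (p : (Fin k → Bool) × (Fin k → Bool)) (lam : Fin k → ℝ) :
    0 ≤ maskedSqNorm p lam :=
  Finset.sum_nonneg fun _ _ => mul_nonneg (sq_nonneg _) (by split_ifs <;> norm_num)

lemma maskedSqNorm_comp_perm (σ : Equiv.Perm (Fin k)) (p : (Fin k → Bool) × (Fin k → Bool))
    (lam : Fin k → ℝ) :
    maskedSqNorm (p.1 ∘ σ, p.2 ∘ σ) (lam ∘ σ) = maskedSqNorm p lam :=
  Equiv.sum_comp σ fun i => lam i ^ 2 * (if p.1 i ≠ p.2 i then 1 else 0)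

lemma F_comp_perm (hex : Exchangeable ζ) (σ : Equiv.Perm (Fin k)) (lam : Fin k → ℝ) :
    F ζ (lam ∘ σ) = F ζ lam := by
  let e : Equiv.Perm (Fin k → Bool) := σ.symm.arrowCongr (Equiv.refl Bool)
  refine (Fintype.sum_equiv (e.prodCongr e) _ _ fun p => ?_).symm
  change ζ p * √(maskedSqNorm p lam)
    = ζ (p.1 ∘ σ, p.2 ∘ σ) * √(maskedSqNorm (p.1 ∘ σ, p.2 ∘ σ) (lam ∘ σ))
  rw [hex, maskedSqNorm_comp_perm]

lemma maskedSqNorm_sub_maskedSqNorm_swap {p : (Fin k → Bool) × (Fin k → Bool)} {j j' : Fin k}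
    (hj : p.1 j = p.2 j) (hj' : p.1 j' ≠ p.2 j') (lam : Fin k → ℝ) :
    maskedSqNorm p lam - maskedSqNorm p (lam ∘ Equiv.swap j j') = lam j' ^ 2 - lam j ^ 2 := by
  rw [maskedSqNorm, maskedSqNorm, ← Finset.sum_sub_distrib, Finset.sum_eq_single j']
  · simp [hj']
  · intro i _ hij'
    by_cases hij : i = j
    · subst hij
      simp [hj]
    · simp [Equiv.swap_apply_of_ne_of_ne hij hij']
  · simp

lemma maskedSqNorm_of_sq_eq_midpoint {lam nu mu : Fin k → ℝ}
    (hmu : ∀ i, mu i ^ 2 = (lam i ^ 2 + nu i ^ 2) / 2) (p : (Fin k → Bool) × (Fin k → Bool)) :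
    maskedSqNorm p mu = (maskedSqNorm p lam + maskedSqNorm p nu) / 2 := by
  simp only [maskedSqNorm, hmu, ← Finset.sum_add_distrib, Finset.sum_div]
  exact Finset.sum_congr rfl fun _ _ => by ring

lemma NonDegenerate.exists_pos (hnd : NonDegenerate ζ) {j j' : Fin k} (hjj' : j ≠ j') :
    ∃ p : (Fin k → Bool) × (Fin k → Bool), p.1 j = p.2 j ∧ p.1 j' ≠ p.2 j' ∧ 0 < ζ p := by
  obtain ⟨p, -, hp⟩ := Finset.exists_lt_of_sum_lt (s := Finset.univ) (f := fun _ => 0)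
    (g := fun p : (Fin k → Bool) × (Fin k → Bool) =>
      if p.1 j = p.2 j ∧ p.1 j' ≠ p.2 j' then ζ p else 0)
    (by simpa using hnd j j' hjj')
  split_ifs at hp with hc
  · exact ⟨p, hc.1, hc.2, hp⟩
  · exact (lt_irrefl 0 hp).elim

lemma F_midpoint_lt (hζ0 : ∀ p, 0 ≤ ζ p) {lam nu mu : Fin k → ℝ}
    (hmu : ∀ i, mu i ^ 2 = (lam i ^ 2 + nu i ^ 2) / 2)
    (hstrict : ∃ p, 0 < ζ p ∧ maskedSqNorm p lam ≠ maskedSqNorm p nu) :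
    (F ζ lam + F ζ nu) / 2 < F ζ mu := by
  obtain ⟨p₀, hp₀, hne⟩ := hstrict
  simp only [F_eq_sum_maskedSqNorm, maskedSqNorm_of_sq_eq_midpoint hmu,
    ← Finset.sum_add_distrib, Finset.sum_div, ← mul_add, mul_div_assoc]
  refine Finset.sum_lt_sum (fun p _ => ?_) ⟨p₀, Finset.mem_univ _, ?_⟩
  · exact mul_le_mul_of_nonneg_left
      (Real.sqrt_midpoint_le (maskedSqNorm_nonneg _ _) (maskedSqNorm_nonneg _ _)) (hζ0 p)
  · exact mul_lt_mul_of_pos_left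
      (Real.sqrt_midpoint_lt (maskedSqNorm_nonneg _ _) (maskedSqNorm_nonneg _ _) hne) hp₀

theorem exists_F_lt_of_sq_ne (hζ0 : ∀ p, 0 ≤ ζ p) (hex : Exchangeable ζ)
    (hnd : NonDegenerate ζ) {lam : Fin k → ℝ} {j j' : Fin k} (hjj' : j ≠ j')
    (hne : lam j ^ 2 ≠ lam j' ^ 2) :
    ∃ mu : Fin k → ℝ, ∑ i, mu i ^ 2 = ∑ i, lam i ^ 2 ∧ F ζ lam < F ζ mu := by
  set nu := lam ∘ Equiv.swap j j'
  set mu : Fin k → ℝ := fun i => √((lam i ^ 2 + nu i ^ 2) / 2)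
  have hmu : ∀ i, mu i ^ 2 = (lam i ^ 2 + nu i ^ 2) / 2 := fun i => Real.sq_sqrt (by positivity)
  obtain ⟨p, hj, hj', hp⟩ := hnd.exists_pos hjj'
  have hstrict : maskedSqNorm p lam ≠ maskedSqNorm p nu := by
    rw [← sub_ne_zero, maskedSqNorm_sub_maskedSqNorm_swap hj hj']
    exact sub_ne_zero.2 hne.symm
  refine ⟨mu, ?_, ?_⟩
  · simp only [hmu, ← Finset.sum_div, Finset.sum_add_distrib, nu, Function.comp_apply,
      Equiv.sum_comp (Equiv.swap j j') fun i => lam i ^ 2]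
    ring
  · calc F ζ lam = (F ζ lam + F ζ nu) / 2 := by rw [F_comp_perm hex]; ring
      _ < F ζ mu := F_midpoint_lt hζ0 hmu ⟨p, hp, hstrict⟩

theorem sq_eq_sq_of_forall_F_le (hζ0 : ∀ p, 0 ≤ ζ p) (hex : Exchangeable ζ)
    (hnd : NonDegenerate ζ) {lam : Fin k → ℝ}
    (hmax : ∀ mu : Fin k → ℝ, ∑ i, mu i ^ 2 = ∑ i, lam i ^ 2 → F ζ mu ≤ F ζ lam) (j j' : Fin k) :
    lam j ^ 2 = lam j' ^ 2 := by
  by_contra hne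
  have hjj' : j ≠ j' := by
    rintro rfl
    exact hne rfl
  obtain ⟨mu, hnorm, hlt⟩ := exists_F_lt_of_sq_ne hζ0 hex hnd hjj' hne
  exact (hmax mu hnorm).not_gt hlt

lemma F_eq_sqrt_mul_F_one {lam : Fin k → ℝ} {c : ℝ} (hc : ∀ i, lam i ^ 2 = c) :
    F ζ lam = √c * F ζ 1 := by
  simp only [F_eq_sum_maskedSqNorm, Finset.mul_sum]
  refine Finset.sum_congr rfl fun p _ => ?_
  have hmask : maskedSqNorm p lam = c * maskedSqNorm p 1 := by
    simp [maskedSqNorm, hc, Finset.mul_sum]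
  rw [hmask, Real.sqrt_mul' _ (maskedSqNorm_nonneg _ _)]
  ring

lemma F_one_pos [Nontrivial (Fin k)] (hζ0 : ∀ p, 0 ≤ ζ p) (hnd : NonDegenerate ζ) :
    0 < F ζ 1 := by
  obtain ⟨j, j', hjj'⟩ := exists_pair_ne (Fin k)
  obtain ⟨p, -, hj', hp⟩ := hnd.exists_pos hjj'
  have hmask : 0 < maskedSqNorm p 1 :=
    lt_of_lt_of_le (by simp [hj'])
      (Finset.single_le_sum (f := fun i => (1 : Fin k → ℝ) i ^ 2 * _)
        (fun i _ => by positivity) (Finset.mem_univ j'))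
  exact Finset.sum_pos' (fun q _ => mul_nonneg (hζ0 q) (Real.sqrt_nonneg _))
    ⟨p, Finset.mem_univ _, mul_pos hp (Real.sqrt_pos.2 hmask)⟩

end

theorem maximizer_is_uniform_general
    (k : ℕ) (hk : 2 ≤ k) (R : ℝ)
    (ζ : ((Fin k → Bool) × (Fin k → Bool)) → ℝ)
    (hζ0 : ∀ p, 0 ≤ ζ p)
    (hex : Exchangeable ζ) (hnd : NonDegenerate ζ)
    (lam : Fin k → ℝ) (hball : (∑ i, (lam i) ^ 2) ≤ R ^ 2)
    (hmax : ∀ mu : Fin k → ℝ, (∑ i, (mu i) ^ 2) ≤ R ^ 2 → F ζ mu ≤ F ζ lam) :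
    ∀ i, (lam i) ^ 2 = R ^ 2 / k := by
  have : Nontrivial (Fin k) := Fin.nontrivial_iff_two_le.2 hk
  have hk0 : (0 : ℝ) < k := Nat.cast_pos.2 (by omega)
  intro i
  have hsq : ∀ j, lam j ^ 2 = lam i ^ 2 := fun j =>
    sq_eq_sq_of_forall_F_le hζ0 hex hnd (fun mu h => hmax mu (h ▸ hball)) j i
  have hunif : √(R ^ 2 / k) ^ 2 = R ^ 2 / k := Real.sq_sqrt (by positivity)
  have hF : √(R ^ 2 / k) * F ζ 1 ≤ √(lam i ^ 2) * F ζ 1 := by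
    rw [← F_eq_sqrt_mul_F_one fun _ => hunif, ← F_eq_sqrt_mul_F_one hsq]
    refine hmax _ (le_of_eq ?_)
    rw [Finset.sum_const, Finset.card_univ, Fintype.card_fin, nsmul_eq_mul, hunif]
    field_simp
  have hge : R ^ 2 / k ≤ lam i ^ 2 :=
    (Real.sqrt_le_sqrt_iff (sq_nonneg _)).1 (le_of_mul_le_mul_right hF (F_one_pos hζ0 hnd))
  have hle : lam i ^ 2 ≤ R ^ 2 / k := by
    rw [le_div_iff₀ hk0]
    simpa [hsq, mul_comm] using hball
  exact le_antisymm hle hge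

/-- Lemma D.1 (uniqueness of the maximizer under non-degeneracy): any maximizer of
`F` over the ball of radius `R` has `λ_i² = R²/k` for every `i`. -/
theorem maximizer_is_uniform
    (k : ℕ) (hk : 2 ≤ k) (R : ℝ) (hR : 0 < R)
    (ζ : ((Fin k → Bool) × (Fin k → Bool)) → ℝ)
    (hζ0 : ∀ p, 0 ≤ ζ p) (hζ1 : ∑ p, ζ p = 1)
    (hex : Exchangeable ζ) (hnd : NonDegenerate ζ)
    (lam : Fin k → ℝ) (hball : (∑ i, (lam i) ^ 2) ≤ R ^ 2)
    (hmax : ∀ mu : Fin k → ℝ, (∑ i, (mu i) ^ 2) ≤ R ^ 2 → F ζ mu ≤ F ζ lam) :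
    ∀ i, (lam i) ^ 2 = R ^ 2 / k :=
  maximizer_is_uniform_general k hk R ζ hζ0 hex hnd lam hball hmax
end
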